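/- arXiv:2507.20639 — 2 statements merged into one kernel-verified Lean document; each statement's English description precedes it below -/
import Mathlib

section
/- Fix an integer k ≥ 3. Let E(q) = k + ∑_{i=1}^{k} (q^{i-1}-1)/(q^k - q^{i-1}) and B(q) = ∑_{i=0}^{k-1} n/(n-i) with n = (q^k-1)/(q-1). Then lim_{q→∞} (E(q) - B(q)) = 0 and lim_{q→∞} E(q)/B(q) = 1, where q ranges over integers ≥ 2. -/
/-!
Both `E(q)` and `B(q)` tend to `k`. Each summand of `E(q) - k` is a rational function of `q`
whose numerator has smaller degree than its denominator, so it tends to `0`; and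
`n = (q^k - 1)/(q - 1) ≥ q` tends to infinity, so each summand `n/(n - i)` of `B(q)` tends to `1`.
-/

open Filter Topology Polynomial

lemma tendsto_pow_sub_one_div_pow_sub_pow_atTop {i k : ℕ} (hik : i < k) :
    Tendsto (fun x : ℝ => (x ^ i - 1) / (x ^ k - x ^ i)) atTop (𝓝 0) := by
  have hden : (X ^ k - X ^ i : ℝ[X]).degree = k := by
    rw [degree_sub_eq_left_of_degree_lt] <;> simp [hik]
  have hnum : (X ^ i - 1 : ℝ[X]).degree < k :=
    (degree_sub_le _ _).trans_lt (by simp [hik])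
  have h := div_tendsto_atTop_zero_of_degree_lt _ _ (hden ▸ hnum)
  simpa only [eval_sub, eval_pow, eval_X, eval_one] using h

lemma tendsto_div_sub_const_atTop (c : ℝ) :
    Tendsto (fun x : ℝ => x / (x - c)) atTop (𝓝 1) := by
  have h := div_tendsto_atTop_leadingCoeff_div_of_degree_eq (X : ℝ[X]) (X - C c) (by simp)
  simpa using h

lemma tendsto_pow_sub_one_div_sub_one_atTop {k : ℕ} (hk : 2 ≤ k) :
    Tendsto (fun x : ℝ => (x ^ k - 1) / (x - 1)) atTop atTop := by
  refine tendsto_atTop_mono' atTop ?_ tendsto_id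
  filter_upwards [eventually_gt_atTop 1] with x hx
  have : x ^ 2 ≤ x ^ k := pow_le_pow_right₀ hx.le hk
  rw [id, le_div_iff₀ (by linarith)]
  nlinarith

/-- Fix `k ≥ 3`. With `E(q) = k + ∑_{i=1}^{k} (q^{i-1}-1)/(q^k - q^{i-1})`
(the expectation for the `q`-ary simplex code of dimension `k`) and
`B(q) = ∑_{i=0}^{k-1} n/(n-i)` where `n = (q^k-1)/(q-1)` (the MDS bound),
we have `E(q) - B(q) → 0` and `E(q)/B(q) → 1` as the integer `q → ∞`. -/
theorem stmt14 (k : ℕ) (hk : 3 ≤ k)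
    (E B : ℕ → ℝ)
    (hE : ∀ q : ℕ, E q =
      (k : ℝ) + ∑ i ∈ Finset.range k, ((q : ℝ) ^ i - 1) / ((q : ℝ) ^ k - (q : ℝ) ^ i))
    (hB : ∀ q : ℕ, B q =
      ∑ i ∈ Finset.range k,
        (((q : ℝ) ^ k - 1) / ((q : ℝ) - 1)) /
          (((q : ℝ) ^ k - 1) / ((q : ℝ) - 1) - (i : ℝ))) :
    Tendsto (fun q : ℕ => E q - B q) atTop (nhds 0) ∧
      Tendsto (fun q : ℕ => E q / B q) atTop (nhds 1) := by
  have hE_lim : Tendsto E atTop (𝓝 k) := by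
    have h := (tendsto_const_nhds (x := (k : ℝ))).add <| tendsto_finsetSum (Finset.range k) fun i hi =>
      (tendsto_pow_sub_one_div_pow_sub_pow_atTop (Finset.mem_range.1 hi)).comp
        tendsto_natCast_atTop_atTop
    simpa [← hE] using h
  have hB_lim : Tendsto B atTop (𝓝 k) := by
    have h := tendsto_finsetSum (Finset.range k) fun i _ =>
      ((tendsto_div_sub_const_atTop (i : ℝ)).comp
        (tendsto_pow_sub_one_div_sub_one_atTop (by omega : 2 ≤ k))).comp
        tendsto_natCast_atTop_atTop
    simpa [← hB] using h
  have hk₀ : (k : ℝ) ≠ 0 := by positivity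
  exact ⟨by simpa using hE_lim.sub hB_lim, div_self hk₀ ▸ hE_lim.div hB_lim hk₀⟩
end

section
/- Fix an integer q ≥ 2. Then lim_{k→∞} ( (k + ∑_{i=1}^{k} (q^{i-1}-1)/(q^k - q^{i-1})) - ∑_{i=0}^{k-1} n_k/(n_k - i) ) = ∑_{i=1}^{∞} 1/(q^i - 1), where n_k = (q^k-1)/(q-1). -/
/-!
Take real `x > 1` and `n_k = (x^k - 1)/(x - 1)`. Reversing the summation order, the `i`-th
simplex term becomes `1 + 1/(x^(i+1) - 1) - x^(i+1)/(x^k (x^(i+1) - 1))`, while the `i`-th MDS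
term is `1 + i/(n_k - i)`. The constant terms cancel, the partial sums of `1/(x^(i+1) - 1)`
converge to the series, and both error sums are `O(k^2 x^(-k))` because `n_k - i ≥ x^(k-1)`.
-/

open Filter Finset

lemma tendsto_sum_range_of_le_mul_pow {g : ℕ → ℕ → ℝ} {c r : ℝ} (m : ℕ) (hr0 : 0 ≤ r)
    (hr1 : r < 1) (hg0 : ∀ k, ∀ i < k, 0 ≤ g k i) (hg : ∀ k, ∀ i < k, g k i ≤ c * k ^ m * r ^ k) :
    Tendsto (fun k => ∑ i ∈ range k, g k i) atTop (nhds 0) := by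
  have hlim := (tendsto_pow_const_mul_const_pow_of_lt_one (m + 1) hr0 hr1).const_mul c
  rw [mul_zero] at hlim
  refine tendsto_of_tendsto_of_tendsto_of_le_of_le tendsto_const_nhds hlim
    (fun k => sum_nonneg fun i hi => hg0 k i (mem_range.mp hi)) fun k => ?_
  calc ∑ i ∈ range k, g k i ≤ k • (c * k ^ m * r ^ k) := by
        simpa using sum_le_card_nsmul (range k) (g k) _ fun i hi => hg k i (mem_range.mp hi)
    _ = c * (k ^ (m + 1) * r ^ k) := by rw [nsmul_eq_mul]; ring

section
variable {x : ℝ}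

lemma pow_succ_div_pow_succ_sub_one_le (hx : 1 < x) (i : ℕ) :
    x ^ (i + 1) / (x ^ (i + 1) - 1) ≤ x / (x - 1) := by
  have hxi : x ≤ x ^ (i + 1) := le_self_pow₀ hx.le i.succ_ne_zero
  rw [div_le_div_iff₀ (by linarith) (by linarith)]
  nlinarith

lemma summable_one_div_pow_succ_sub_one (hx : 1 < x) :
    Summable fun i : ℕ => 1 / (x ^ (i + 1) - 1) := by
  have hx0 : 0 < x := by linarith
  refine .of_nonneg_of_le (fun i => ?_) (fun i => ?_)
    (((summable_nat_add_iff 1).mpr (summable_geometric_of_lt_one (by positivity)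
      ((div_lt_one hx0).mpr hx))).mul_left (x / (x - 1)))
  · have : 1 < x ^ (i + 1) := one_lt_pow₀ hx i.succ_ne_zero
    exact div_nonneg zero_le_one (by linarith)
  · calc 1 / (x ^ (i + 1) - 1) = x ^ (i + 1) / (x ^ (i + 1) - 1) * (1 / x) ^ (i + 1) := by
          rw [one_div_pow, div_mul_div_comm, mul_one, mul_comm, ← div_div,
            div_self (by positivity)]
      _ ≤ x / (x - 1) * (1 / x) ^ (i + 1) := by
          gcongr ?_ * _
          exact pow_succ_div_pow_succ_sub_one_le hx i

lemma one_add_div_pow_sub_pow (hx : 1 < x) {i k : ℕ} (h : i < k) :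
    1 + (x ^ i - 1) / (x ^ k - x ^ i) = (x ^ k - 1) / (x ^ k - x ^ i) := by
  have : x ^ i < x ^ k := pow_lt_pow_right₀ hx h
  field_simp [sub_ne_zero.mpr this.ne']
  ring

-- `x ^ k - x ^ (k - 1 - i) = x ^ (k - 1 - i) * (x ^ (i + 1) - 1)`
lemma div_pow_sub_pow_reflect (hx : 1 < x) {i k : ℕ} (h : i < k) :
    (x ^ k - 1) / (x ^ k - x ^ (k - 1 - i)) =
      1 + 1 / (x ^ (i + 1) - 1) - x ^ (i + 1) / (x ^ k * (x ^ (i + 1) - 1)) := by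
  have hk : x ^ k = x ^ (k - 1 - i) * x ^ (i + 1) := by rw [← pow_add]; congr 1; omega
  have ha : 0 < x ^ (k - 1 - i) := pow_pos (by linarith) _
  have hb : 1 < x ^ (i + 1) := one_lt_pow₀ hx i.succ_ne_zero
  rw [hk]
  generalize x ^ (k - 1 - i) = a at ha ⊢
  field_simp [(by nlinarith : a * x ^ (i + 1) - a ≠ 0), (by linarith : x ^ (i + 1) - 1 ≠ 0)]
  ring

lemma natCast_add_sum_div_pow_sub_pow (hx : 1 < x) (k : ℕ) :
    (k : ℝ) + ∑ i ∈ range k, (x ^ i - 1) / (x ^ k - x ^ i) =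
      ∑ i ∈ range k,
        (1 + 1 / (x ^ (i + 1) - 1) - x ^ (i + 1) / (x ^ k * (x ^ (i + 1) - 1))) := by
  calc (k : ℝ) + ∑ i ∈ range k, (x ^ i - 1) / (x ^ k - x ^ i)
      = ∑ i ∈ range k, (x ^ k - 1) / (x ^ k - x ^ i) := by
        rw [← sum_congr rfl fun i hi => one_add_div_pow_sub_pow hx (mem_range.mp hi),
          sum_add_distrib, sum_const, card_range, nsmul_one]
    _ = ∑ i ∈ range k, (x ^ k - 1) / (x ^ k - x ^ (k - 1 - i)) :=
        (sum_range_reflect (fun i => (x ^ k - 1) / (x ^ k - x ^ i)) k).symm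
    _ = _ := sum_congr rfl fun i hi => div_pow_sub_pow_reflect hx (mem_range.mp hi)

lemma pow_div_le_geom_sum_sub (hx : 1 < x) {i k : ℕ} (h : i < k) :
    x ^ k / x ≤ ∑ j ∈ range k, x ^ j - i := by
  obtain ⟨m, rfl⟩ := Nat.exists_eq_add_of_lt h
  have hm : ((i + m : ℕ) : ℝ) ≤ ∑ j ∈ range (i + m), x ^ j := by
    simpa using card_nsmul_le_sum (range (i + m)) (x ^ ·) 1 fun j _ => one_le_pow₀ hx.le
  rw [sum_range_succ, pow_succ, mul_div_cancel_right₀ _ (by linarith)]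
  push_cast at hm
  linarith [pow_nonneg (zero_le_one.trans hx.le) m]

lemma tendsto_sum_pow_succ_div_mul_pow_sub_one (hx : 1 < x) :
    Tendsto (fun k : ℕ => ∑ i ∈ range k, x ^ (i + 1) / (x ^ k * (x ^ (i + 1) - 1)))
      atTop (nhds 0) := by
  have hx0 : 0 < x := by linarith
  refine tendsto_sum_range_of_le_mul_pow (c := x / (x - 1)) 0 (by positivity)
    ((div_lt_one hx0).mpr hx) (fun k i _ => ?_) fun k i _ => ?_
  · have : 1 < x ^ (i + 1) := one_lt_pow₀ hx i.succ_ne_zero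
    have : 0 < x ^ k := by positivity
    exact div_nonneg (by positivity) (mul_nonneg (by positivity) (by linarith))
  · calc x ^ (i + 1) / (x ^ k * (x ^ (i + 1) - 1))
        = x ^ (i + 1) / (x ^ (i + 1) - 1) * (1 / x) ^ k := by
          rw [one_div_pow, div_mul_div_comm, mul_one, mul_comm (x ^ (i + 1) - 1)]
      _ ≤ x / (x - 1) * (k : ℝ) ^ 0 * (1 / x) ^ k := by
          rw [pow_zero, mul_one]
          gcongr ?_ * _
          exact pow_succ_div_pow_succ_sub_one_le hx i

lemma tendsto_sum_div_geom_sum_sub (hx : 1 < x) :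
    Tendsto (fun k : ℕ => ∑ i ∈ range k, (i : ℝ) / (∑ j ∈ range k, x ^ j - i))
      atTop (nhds 0) := by
  have hx0 : 0 < x := by linarith
  refine tendsto_sum_range_of_le_mul_pow (c := x) 1 (by positivity)
    ((div_lt_one hx0).mpr hx) (fun k i hi => ?_) fun k i hi => ?_
  · exact div_nonneg i.cast_nonneg
      ((by positivity : 0 ≤ x ^ k / x).trans (pow_div_le_geom_sum_sub hx hi))
  · calc (i : ℝ) / (∑ j ∈ range k, x ^ j - i) ≤ k / (x ^ k / x) := by
          gcongr
          exact pow_div_le_geom_sum_sub hx hi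
      _ = x * k ^ 1 * (1 / x) ^ k := by
          rw [one_div_pow, pow_one]
          field_simp

theorem tendsto_simplex_sub_mds (hx : 1 < x) :
    Tendsto
      (fun k : ℕ => ((k : ℝ) + ∑ i ∈ range k, (x ^ i - 1) / (x ^ k - x ^ i)) -
        ∑ i ∈ range k, ((x ^ k - 1) / (x - 1)) / ((x ^ k - 1) / (x - 1) - i))
      atTop (nhds (∑' i : ℕ, 1 / (x ^ (i + 1) - 1))) := by
  have hsum := (summable_one_div_pow_succ_sub_one hx).hasSum.tendsto_sum_nat
  have hlim := (hsum.sub (tendsto_sum_pow_succ_div_mul_pow_sub_one hx)).sub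
    (tendsto_sum_div_geom_sum_sub hx)
  rw [sub_zero, sub_zero] at hlim
  refine hlim.congr fun k => ?_
  rw [← geom_sum_eq hx.ne', natCast_add_sum_div_pow_sub_pow hx]
  set N := ∑ j ∈ range k, x ^ j
  have hmds : ∑ i ∈ range k, N / (N - i) = ∑ i ∈ range k, (1 + i / (N - i)) := by
    refine sum_congr rfl fun i hi => ?_
    have hNi : 0 < N - i := (div_pos (pow_pos (by linarith) k) (by linarith)).trans_le
      (pow_div_le_geom_sum_sub hx (mem_range.mp hi))
    rw [← same_add_div hNi.ne', sub_add_cancel]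
  rw [hmds]
  simp only [sum_add_distrib, sum_sub_distrib]
  ring

end

/-- Fix an integer `q ≥ 2`. Then, as `k → ∞`, the difference between the
expectation for the `q`-ary simplex code of dimension `k`, namely
`k + ∑_{i=1}^{k} (q^{i-1}-1)/(q^k - q^{i-1})`, and the MDS bound
`∑_{i=0}^{k-1} n_k/(n_k - i)` with `n_k = (q^k-1)/(q-1)`, tends to
`∑_{i=1}^{∞} 1/(q^i - 1)`. -/
theorem stmt15 (q : ℕ) (hq : 2 ≤ q) :
    Tendsto
      (fun k : ℕ =>
        ((k : ℝ) + ∑ i ∈ Finset.range k, ((q : ℝ) ^ i - 1) / ((q : ℝ) ^ k - (q : ℝ) ^ i)) -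
          ∑ i ∈ Finset.range k,
            (((q : ℝ) ^ k - 1) / ((q : ℝ) - 1)) /
              (((q : ℝ) ^ k - 1) / ((q : ℝ) - 1) - (i : ℝ)))
      atTop (nhds (∑' i : ℕ, 1 / ((q : ℝ) ^ (i + 1) - 1))) :=
  tendsto_simplex_sub_mds (by exact_mod_cast hq)
end
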